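/- arXiv:2403.20111 — 2 statements merged into one kernel-verified Lean document; each statement's English description precedes it below -/
import Mathlib

section
/- The polynomial x⁴ − x³ − x² − x + 1 ∈ ℤ[x] has at least one complex root of absolute value 1 (i.e., it is toral as a one-variable polynomial). -/
/-!
The quartic is palindromic: with `w² = w + 3` it factors as
`(z² - w z + 1) (z² - (1 - w) z + 1)`. The root `w = (1 - √13) / 2` lies in `[-2, 2]`,
so `w = 2 cos θ` and `z = e^{iθ}` is a root of the first factor on the unit circle.
-/

open Complex in
theorem Complex.exists_norm_eq_one_sq_sub_mul_add_one_eq_zero {t : ℝ} (ht : |t| ≤ 2) :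
    ∃ z : ℂ, ‖z‖ = 1 ∧ z ^ 2 - t * z + 1 = 0 := by
  set θ := Real.arccos (t / 2)
  have hcos : (t : ℂ) = 2 * cos θ := by
    rw [← ofReal_cos, Real.cos_arccos (by linarith [neg_abs_le t]) (by linarith [le_abs_self t])]
    push_cast
    ring
  have hinv : exp (-θ * I) * exp (θ * I) = 1 := by
    rw [← exp_add, neg_mul, neg_add_cancel, exp_zero]
  refine ⟨exp (θ * I), norm_exp_ofReal_mul_I θ, ?_⟩
  rw [hcos, two_cos]
  linear_combination -hinv

/-- The polynomial `x⁴ − x³ − x² − x + 1` has a complex root of absolute value 1: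
it is toral as a one-variable polynomial. -/
theorem stmt_3 : ∃ z : ℂ, ‖z‖ = 1 ∧ z ^ 4 - z ^ 3 - z ^ 2 - z + 1 = 0 := by
  set w : ℝ := (1 - √13) / 2 with hw_def
  have hsqrt : √13 ^ 2 = 13 := Real.sq_sqrt (by norm_num)
  have hw : w ^ 2 = w + 3 := by linear_combination hsqrt / 4
  have hw_abs : |w| ≤ 2 := by
    have : √13 ≤ 5 := Real.sqrt_le_iff.mpr ⟨by norm_num, by norm_num⟩
    rw [abs_le, hw_def]
    constructor <;> linarith [Real.sqrt_nonneg 13]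
  obtain ⟨z, hz_norm, hz⟩ := Complex.exists_norm_eq_one_sq_sub_mul_add_one_eq_zero hw_abs
  have hw' : (w : ℂ) ^ 2 = w + 3 := by exact_mod_cast hw
  refine ⟨z, hz_norm, ?_⟩
  linear_combination (z ^ 2 + ((w : ℂ) - 1) * z + 1) * hz + z ^ 2 * hw'
end

section
/- The quotient module R₂/⟨2, 1+x+y⟩ is not lacunarily independent: for F = {0, 1} ⊂ R₂/⟨2, 1+x+y⟩ and for every M ≥ 1, there exists a finite subset S ⊂ ℤ² with pairwise distances at least M such that the collection {x^n·F : n ∈ S} is not independent, i.e., there exist two distinct choices of elements from the sets x^n·F with equal sums. -/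
/-- `R₂ = ℤ[x^{±1}, y^{±1}]`, as the group algebra `ℤ[ℤ²]`. -/
abbrev R2 := AddMonoidAlgebra ℤ (Fin 2 → ℤ)

/-- The monomial `x^n` for `n ∈ ℤ²`. -/
noncomputable def mono (n : Fin 2 → ℤ) : R2 := AddMonoidAlgebra.single n 1

/-- The ideal `⟨2, 1 + x + y⟩` of `R₂`. -/
noncomputable def frakp : Ideal R2 :=
  Ideal.span {(2 : R2), 1 + mono ![1, 0] + mono ![0, 1]}

/-- The sup-norm `‖m‖ = max_j |m_j|` on `ℤ²`. -/
def snorm (m : Fin 2 → ℤ) : ℕ := Finset.univ.sup fun j => (m j).natAbs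

/-!
In characteristic 2 the Frobenius map is additive, so `1 + x + y = 0` in `R₂/⟨2, 1+x+y⟩` gives
`1 + x^N + y^N = (1 + x + y)^N = 0` for every `N = 2^k`. Hence for `S = {0, N e₁, N e₂}`, whose
points are `N`-separated, the choice `a ≡ 1` has the same sum as `b ≡ 0`. These choices differ
because the quotient is nonzero: `x ↦ ω`, `y ↦ ω²`, with `ω` a primitive cube root of unity in
`𝔽₄`, is a ring map that kills `2` and `1 + x + y`.
-/

open Polynomial

noncomputable def evalUnits {A : Type*} [CommRing A] (u v : Aˣ) : R2 →+* A :=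
  AddMonoidAlgebra.lift ℤ A (Fin 2 → ℤ)
    ((Units.coeHom A).comp
      ((zpowersHom Aˣ u).comp (AddMonoidHom.toMultiplicative (Pi.evalAddMonoidHom _ 0)) *
        (zpowersHom Aˣ v).comp (AddMonoidHom.toMultiplicative (Pi.evalAddMonoidHom _ 1))))

section evalUnits

variable {A : Type*} [CommRing A] (u v : Aˣ)

lemma evalUnits_mono (n : Fin 2 → ℤ) :
    evalUnits u v (mono n) = ((u ^ n 0 * v ^ n 1 : Aˣ) : A) := by
  simp [evalUnits, mono]

lemma frakp_le_ker_evalUnits (h2 : (2 : A) = 0) (h : 1 + (u : A) + v = 0) :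
    frakp ≤ RingHom.ker (evalUnits u v) := by
  rw [frakp, Ideal.span_le, Set.insert_subset_iff, Set.singleton_subset_iff]
  refine ⟨by rw [SetLike.mem_coe, RingHom.mem_ker, map_ofNat]; exact h2, ?_⟩
  simpa [evalUnits_mono] using h

end evalUnits

abbrev F4 := AdjoinRoot (X ^ 2 + X + 1 : (ZMod 2)[X])

namespace F4

instance : Nontrivial F4 :=
  AdjoinRoot.nontrivial _ <| by
    rw [show (X ^ 2 + X + 1 : (ZMod 2)[X]).degree = 2 by compute_degree!]; decide

instance : CharP F4 2 := charP_of_injective_algebraMap' (ZMod 2) 2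

lemma root_sq_add_root_add_one :
    AdjoinRoot.root (X ^ 2 + X + 1 : (ZMod 2)[X]) ^ 2
      + AdjoinRoot.root (X ^ 2 + X + 1 : (ZMod 2)[X]) + 1 = 0 := by
  have h := AdjoinRoot.eval₂_root (X ^ 2 + X + 1 : (ZMod 2)[X])
  rwa [eval₂_add, eval₂_add, eval₂_X_pow, eval₂_X, eval₂_one] at h

noncomputable def ω : F4ˣ where
  val := AdjoinRoot.root _
  inv := AdjoinRoot.root _ + 1
  val_inv := by linear_combination root_sq_add_root_add_one - CharTwo.two_eq_zero (R := F4)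
  inv_val := by linear_combination root_sq_add_root_add_one - CharTwo.two_eq_zero (R := F4)

lemma val_ω : (ω : F4) = AdjoinRoot.root _ := rfl

lemma one_add_ω_add_ω_sq : 1 + (ω : F4) + ((ω ^ 2 : F4ˣ) : F4) = 0 := by
  rw [Units.val_pow_eq_pow_val, val_ω]; linear_combination root_sq_add_root_add_one

end F4

lemma frakp_ne_top : frakp ≠ ⊤ := fun h =>
  RingHom.ker_ne_top (evalUnits F4.ω (F4.ω ^ 2)) <| top_le_iff.1 <|
    h ▸ frakp_le_ker_evalUnits _ _ CharTwo.two_eq_zero F4.one_add_ω_add_ω_sq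

instance : Nontrivial (R2 ⧸ frakp) := Ideal.Quotient.nontrivial_iff.2 frakp_ne_top

instance : CharP (R2 ⧸ frakp) 2 :=
  CharTwo.of_one_ne_zero_of_two_eq_zero one_ne_zero <| by
    rw [← map_ofNat (Ideal.Quotient.mk frakp), Ideal.Quotient.eq_zero_iff_mem]
    exact Ideal.subset_span (Set.mem_insert _ _)

lemma one_add_mk_mono_pow_two_pow_add_mk_mono_pow_two_pow (k : ℕ) :
    1 + Ideal.Quotient.mk frakp (mono ![1, 0]) ^ 2 ^ k
      + Ideal.Quotient.mk frakp (mono ![0, 1]) ^ 2 ^ k = 0 := by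
  have h : Ideal.Quotient.mk frakp (1 + mono ![1, 0] + mono ![0, 1]) = 0 :=
    Ideal.Quotient.eq_zero_iff_mem.2 (Ideal.subset_span (by simp))
  rw [map_add, map_add, map_one] at h
  rw [← one_pow (2 ^ k), ← add_pow_char_pow, ← add_pow_char_pow, h, zero_pow (by positivity)]

lemma mono_nsmul (n : ℕ) (v : Fin 2 → ℤ) : mono (n • v) = mono v ^ n := by
  simp [mono, AddMonoidAlgebra.single_pow]

lemma le_snorm_of_exists_le_natAbs {N : ℕ} {m : Fin 2 → ℤ} (h : ∃ j, N ≤ (m j).natAbs) :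
    N ≤ snorm m :=
  let ⟨j, hj⟩ := h
  hj.trans (Finset.le_sup (f := fun j => (m j).natAbs) (Finset.mem_univ j))

def triangle (N : ℕ) : Finset (Fin 2 → ℤ) := {0, N • ![1, 0], N • ![0, 1]}

lemma le_snorm_sub_of_mem_triangle {N : ℕ} {m n : Fin 2 → ℤ} (hm : m ∈ triangle N)
    (hn : n ∈ triangle N) (hmn : m ≠ n) : N ≤ snorm (m - n) := by
  simp only [triangle, Finset.mem_insert, Finset.mem_singleton] at hm hn
  rcases hm with rfl | rfl | rfl <;> rcases hn with rfl | rfl | rfl <;>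
    first
    | exact absurd rfl hmn
    | exact le_snorm_of_exists_le_natAbs (by simp [Fin.exists_fin_two])

lemma sum_triangle_mk_mono {N : ℕ} (hN : N ≠ 0) :
    ∑ n ∈ triangle N, Ideal.Quotient.mk frakp (mono n) =
      1 + Ideal.Quotient.mk frakp (mono ![1, 0]) ^ N
        + Ideal.Quotient.mk frakp (mono ![0, 1]) ^ N := by
  rw [triangle, Finset.sum_insert, Finset.sum_insert, Finset.sum_singleton, add_assoc]
  · simp only [mono_nsmul, map_pow]; rfl
  all_goals simp [funext_iff, Fin.forall_fin_two, hN, eq_comm (a := (0 : ℤ))]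

theorem stmt_11_general (M : ℕ) :
    ∃ S : Finset (Fin 2 → ℤ),
      (∀ m ∈ S, ∀ n ∈ S, m ≠ n → M ≤ snorm (m - n)) ∧
      ∃ a b : (Fin 2 → ℤ) → R2 ⧸ frakp,
        (∀ n ∈ S, a n = 0 ∨ a n = 1) ∧
        (∀ n ∈ S, b n = 0 ∨ b n = 1) ∧
        (∑ n ∈ S, Ideal.Quotient.mk frakp (mono n) * a n) =
          (∑ n ∈ S, Ideal.Quotient.mk frakp (mono n) * b n) ∧
        ∃ n ∈ S, a n ≠ b n := by
  refine ⟨triangle (2 ^ M), fun m hm n hn hmn =>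
      M.lt_two_pow_self.le.trans (le_snorm_sub_of_mem_triangle hm hn hmn),
    fun _ => 1, fun _ => 0, fun _ _ => Or.inr rfl, fun _ _ => Or.inl rfl, ?_,
    0, by simp [triangle], one_ne_zero⟩
  simp only [mul_one, mul_zero, Finset.sum_const_zero]
  rw [sum_triangle_mk_mono (by positivity), one_add_mk_mono_pow_two_pow_add_mk_mono_pow_two_pow]

/-- The `R₂`-module `R₂/⟨2, 1+x+y⟩` is not lacunarily independent: taking
`F = {0, 1}`, for every `M ≥ 1` there is a finite set `S ⊂ ℤ²` with pairwise
sup-distances at least `M` and two distinct choices of elements of `F` indexed by `S`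
whose monomial-weighted sums `∑_{n ∈ S} x^n·a_n` agree. -/
theorem stmt_11 (M : ℕ) (hM : 1 ≤ M) :
    ∃ S : Finset (Fin 2 → ℤ),
      (∀ m ∈ S, ∀ n ∈ S, m ≠ n → M ≤ snorm (m - n)) ∧
      ∃ a b : (Fin 2 → ℤ) → R2 ⧸ frakp,
        (∀ n ∈ S, a n = 0 ∨ a n = 1) ∧
        (∀ n ∈ S, b n = 0 ∨ b n = 1) ∧
        (∑ n ∈ S, Ideal.Quotient.mk frakp (mono n) * a n) =
          (∑ n ∈ S, Ideal.Quotient.mk frakp (mono n) * b n) ∧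
        ∃ n ∈ S, a n ≠ b n :=
  stmt_11_general M
end
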